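/- Let n, m be positive integers and let L : ℝ^m × (Fin n → ℝ^m) → ℝ be a C³ first-order Lagrangian density L(u, p). Let φ : ℝⁿ → ℝ^m be a smooth solution of the Euler–Lagrange equations E_i[φ] = 0, and let ψ₁, ψ₂ : ℝⁿ → ℝ^m be smooth solutions of the linearized Euler–Lagrange equations along φ, i.e. (d/dt)|_{t=0} E_i[φ + tψ_k] = 0 for k = 1, 2 and all i. Define the presymplectic current σ^a(x) = Σ_i ψ₁^i(x) · (d/dt)|_{t=0} ( (∂L/∂p_a^i)(φ(x)+tψ₂(x), ∂φ(x)+t∂ψ₂(x)) ) − Σ_i ψ₂^i(x) · (d/dt)|_{t=0} ( (∂L/∂p_a^i)(φ(x)+tψ₁(x), ∂φ(x)+t∂ψ₁(x)) ). Then the presymplectic current is conserved: Σ_a ∂_a σ^a(x) = 0 for all x ∈ ℝⁿ. -/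

import Mathlib

noncomputable section

open scoped BigOperators

/-- Partial derivative of `f : ℝⁿ → E` in the `a`-th coordinate direction. -/
def pd {n : ℕ} {E : Type*} [NormedAddCommGroup E] [NormedSpace ℝ E]
    (a : Fin n) (f : (Fin n → ℝ) → E) (x : Fin n → ℝ) : E :=
  fderiv ℝ f x (Pi.single a 1)

/-- First-jet evaluation `j_φ(x) = (φ(x), (∂_a φ(x)))`. -/
def jet1 {n m : ℕ} (φ : (Fin n → ℝ) → (Fin m → ℝ)) (x : Fin n → ℝ) :
    (Fin m → ℝ) × (Fin n → Fin m → ℝ) :=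
  (φ x, fun a => fderiv ℝ φ x (Pi.single a 1))

/-- `∂L/∂u^i` for a first-order Lagrangian density `L = L(u, p)`. -/
def dLdu {n m : ℕ} (L : (Fin m → ℝ) × (Fin n → Fin m → ℝ) → ℝ)
    (i : Fin m) (up : (Fin m → ℝ) × (Fin n → Fin m → ℝ)) : ℝ :=
  fderiv ℝ L up (Pi.single i 1, 0)

/-- `∂L/∂p_a^i` for a first-order Lagrangian density `L = L(u, p)`. -/
def dLdp {n m : ℕ} (L : (Fin m → ℝ) × (Fin n → Fin m → ℝ) → ℝ)
    (a : Fin n) (i : Fin m) (up : (Fin m → ℝ) × (Fin n → Fin m → ℝ)) : ℝ :=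
  fderiv ℝ L up (0, Pi.single a (Pi.single i 1))

/-- The Euler–Lagrange expression `E_i[φ] = ∂L/∂u^i − Σ_a ∂_a((∂L/∂p_a^i) ∘ j_φ)`. -/
def EulerLagrange {n m : ℕ} (L : (Fin m → ℝ) × (Fin n → Fin m → ℝ) → ℝ)
    (φ : (Fin n → ℝ) → (Fin m → ℝ)) (i : Fin m) (x : Fin n → ℝ) : ℝ :=
  dLdu L i (jet1 φ x) - ∑ a, pd a (fun y => dLdp L a i (jet1 φ y)) x

abbrev JJ (n m : ℕ) := (Fin m → ℝ) × (Fin n → Fin m → ℝ)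

variable {n m : ℕ}

lemma pi_decomp (u : Fin m → ℝ) : u = ∑ i, u i • (Pi.single i 1 : Fin m → ℝ) := by
  funext j
  rw [Finset.sum_apply]
  simp [Pi.single_apply]

lemma pi2_decomp (p : Fin n → Fin m → ℝ) :
    p = ∑ a, ∑ i, p a i • (Pi.single a (Pi.single i 1) : Fin n → Fin m → ℝ) := by
  funext b j
  simp only [Finset.sum_apply, Pi.smul_apply, Pi.single_apply, smul_eq_mul, mul_ite, mul_one,
    mul_zero]
  simp [apply_ite (fun f : Fin m → ℝ => f j), Pi.single_apply, Finset.sum_ite_eq]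

lemma clm_lin1 (S : (Fin m → ℝ) →L[ℝ] ℝ) (u : Fin m → ℝ) :
    S u = ∑ i, u i * S (Pi.single i 1) := by
  conv_lhs => rw [pi_decomp u]
  rw [map_sum]
  simp

lemma clm_lin2 (S : (Fin n → Fin m → ℝ) →L[ℝ] ℝ) (p : Fin n → Fin m → ℝ) :
    S p = ∑ a, ∑ i, p a i * S (Pi.single a (Pi.single i 1)) := by
  conv_lhs => rw [pi2_decomp p]
  rw [map_sum]
  simp

lemma clm_decomp (T : JJ n m →L[ℝ] ℝ) (v : JJ n m) :
    T v = (∑ i, v.1 i * T (Pi.single i 1, 0))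
        + ∑ a, ∑ i, v.2 a i * T (0, Pi.single a (Pi.single i 1)) := by
  set S1 : (Fin m → ℝ) →L[ℝ] ℝ := T.comp (ContinuousLinearMap.inl ℝ _ _) with hS1
  set S2 : (Fin n → Fin m → ℝ) →L[ℝ] ℝ := T.comp (ContinuousLinearMap.inr ℝ _ _) with hS2
  have key : ∀ (u : Fin m → ℝ) (p : Fin n → Fin m → ℝ), T (u, p) = S1 u + S2 p := by
    intro u p
    have h : ((u, p) : JJ n m) = (u, 0) + (0, p) := by simp
    rw [h, map_add]
    rfl
  calc T v = T (v.1, v.2) := by rw [Prod.mk.eta]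
    _ = S1 v.1 + S2 v.2 := key v.1 v.2
    _ = _ := by
        rw [clm_lin1 S1 v.1, clm_lin2 S2 v.2]
        rfl

lemma hasDerivAt_along {G : JJ n m → ℝ} {u : JJ n m} (hG : DifferentiableAt ℝ G u)
    (v : JJ n m) :
    HasDerivAt (fun t : ℝ => G (u + t • v)) (fderiv ℝ G u v) 0 := by
  have hline : HasDerivAt (fun t : ℝ => u + t • v) v 0 := by
    have h := ((hasDerivAt_id (0:ℝ)).smul_const v).const_add u
    simpa using h
  have hGu : HasFDerivAt G (fderiv ℝ G u) (u + (0:ℝ) • v) := by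
    simpa using hG.hasFDerivAt
  exact hGu.comp_hasDerivAt 0 hline

lemma hasFDerivAt_fderiv_apply {L : JJ n m → ℝ} (hL : ContDiff ℝ 3 L) (e up : JJ n m) :
    HasFDerivAt (fun q => fderiv ℝ L q e)
      ((ContinuousLinearMap.apply ℝ ℝ e).comp (fderiv ℝ (fderiv ℝ L) up)) up := by
  have h1 : ContDiff ℝ 2 (fderiv ℝ L) := hL.fderiv_right (by norm_num)
  have h2 : HasFDerivAt (fderiv ℝ L) (fderiv ℝ (fderiv ℝ L) up) up :=
    ((h1.differentiable (by norm_num)) up).hasFDerivAt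
  exact (ContinuousLinearMap.apply ℝ ℝ e).hasFDerivAt.comp up h2

lemma hasDerivAt_pd_swap {g : ℝ × ((Fin n → ℝ)) → ℝ} (hg : ContDiff ℝ 2 g)
    (x w : Fin n → ℝ) :
    HasDerivAt (fun t : ℝ => fderiv ℝ (fun y => g (t, y)) x w)
      (fderiv ℝ (fun y => deriv (fun t : ℝ => g (t, y)) 0) x w) 0 := by
  have hdg : Differentiable ℝ g := hg.differentiable (by norm_num)
  have hg' : ContDiff ℝ 1 (fderiv ℝ g) := hg.fderiv_right (by norm_num)
  have hg'd : Differentiable ℝ (fderiv ℝ g) := hg'.differentiable one_ne_zero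
  set H := fderiv ℝ (fderiv ℝ g) (0, x) with hH
  have hsymm : ∀ v w, H v w = H w v :=
    second_derivative_symmetric (fun y => (hdg y).hasFDerivAt) ((hg'd (0, x)).hasFDerivAt)
  -- partial fderiv in y equals full fderiv composed with inr
  have ha : ∀ (t : ℝ), fderiv ℝ (fun y => g (t, y)) x
      = (fderiv ℝ g (t, x)).comp (ContinuousLinearMap.inr ℝ ℝ (Fin n → ℝ)) := by
    intro t
    exact ((hdg (t, x)).hasFDerivAt.comp x (hasFDerivAt_prodMk_right t x)).fderiv
  -- deriv in t equals full fderiv applied to (1,0)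
  have hb : ∀ y, HasDerivAt (fun t : ℝ => g (t, y)) (fderiv ℝ g (0, y) (1, 0)) 0 := by
    intro y
    exact (hdg (0, y)).hasFDerivAt.comp_hasDerivAt 0
      ((hasDerivAt_id 0).prodMk (hasDerivAt_const 0 y))
  -- LHS as second derivative
  have hc : HasDerivAt (fun t : ℝ => fderiv ℝ g (t, x) ((0 : ℝ), w)) (H (1, 0) (0, w)) 0 := by
    have h1 : HasDerivAt (fun t : ℝ => fderiv ℝ g (t, x)) (H ((1:ℝ), (0 : Fin n → ℝ))) 0 :=
      (hg'd (0, x)).hasFDerivAt.comp_hasDerivAt 0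
        ((hasDerivAt_id 0).prodMk (hasDerivAt_const 0 x))
    exact (ContinuousLinearMap.apply ℝ ℝ ((0 : ℝ), w)).hasFDerivAt.comp_hasDerivAt 0 h1
  -- RHS as second derivative
  have hd : HasFDerivAt (fun y => fderiv ℝ g (0, y) ((1:ℝ), (0 : Fin n → ℝ)))
      ((ContinuousLinearMap.apply ℝ ℝ ((1:ℝ), (0 : Fin n → ℝ))).comp
        ((fderiv ℝ (fderiv ℝ g) (0, x)).comp (ContinuousLinearMap.inr ℝ ℝ (Fin n → ℝ)))) x := by
    have h1 : HasFDerivAt (fun y => fderiv ℝ g (0, y))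
        ((fderiv ℝ (fderiv ℝ g) (0, x)).comp (ContinuousLinearMap.inr ℝ ℝ (Fin n → ℝ))) x :=
      (hg'd (0, x)).hasFDerivAt.comp x (hasFDerivAt_prodMk_right 0 x)
    exact (ContinuousLinearMap.apply ℝ ℝ ((1:ℝ), (0 : Fin n → ℝ))).hasFDerivAt.comp x h1
  have hleft : (fun t : ℝ => fderiv ℝ (fun y => g (t, y)) x w)
      = fun t : ℝ => fderiv ℝ g (t, x) ((0 : ℝ), w) := by
    funext t
    rw [ha t]
    rfl
  have hright : fderiv ℝ (fun y => deriv (fun t : ℝ => g (t, y)) 0) x w = H (0, w) (1, 0) := by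
    have h2 : (fun y => deriv (fun t : ℝ => g (t, y)) 0)
        = fun y => fderiv ℝ g (0, y) ((1:ℝ), (0 : Fin n → ℝ)) := by
      funext y
      exact (hb y).deriv
    rw [h2, hd.fderiv]
    rfl
  rw [hleft, hright, ← hsymm]
  exact hc

lemma contDiff_jet1 {φ : (Fin n → ℝ) → (Fin m → ℝ)} (hφ : ContDiff ℝ (⊤ : ℕ∞) φ) :
    ContDiff ℝ (⊤ : ℕ∞) (jet1 φ) := by
  have h1 : ContDiff ℝ (⊤ : ℕ∞) (fderiv ℝ φ) := hφ.fderiv_right (by simp)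
  refine hφ.prodMk (contDiff_pi.mpr fun a => ?_)
  exact (ContinuousLinearMap.apply ℝ (Fin m → ℝ) (Pi.single a 1)).contDiff.comp h1

lemma jet1_add_smul {φ ψ : (Fin n → ℝ) → (Fin m → ℝ)} (hφ : Differentiable ℝ φ)
    (hψ : Differentiable ℝ ψ) (t : ℝ) (y : Fin n → ℝ) :
    jet1 (fun z => φ z + t • ψ z) y = jet1 φ y + t • jet1 ψ y := by
  have hd : fderiv ℝ (fun z => φ z + t • ψ z) y = fderiv ℝ φ y + t • fderiv ℝ ψ y := by
    rw [fderiv_fun_add (hφ y) ((hψ y).fun_const_smul t), fderiv_fun_const_smul (hψ y)]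
  unfold jet1
  refine Prod.ext rfl ?_
  simp only [hd]
  funext a
  simp

lemma pd_coord {ψ : (Fin n → ℝ) → (Fin m → ℝ)} (hψ : Differentiable ℝ ψ)
    (a : Fin n) (i : Fin m) (x : Fin n → ℝ) :
    pd a (fun y => ψ y i) x = fderiv ℝ ψ x (Pi.single a 1) i := by
  have h2 : HasFDerivAt (fun y => ψ y i)
      ((ContinuousLinearMap.proj i).comp (fderiv ℝ ψ x)) x :=
    (ContinuousLinearMap.proj (R := ℝ) (φ := fun _ : Fin m => ℝ) i).hasFDerivAt.comp x
      (hψ x).hasFDerivAt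
  unfold pd
  rw [h2.fderiv]
  rfl

lemma linearized_key {L : JJ n m → ℝ} (hL : ContDiff ℝ 3 L)
    {φ ψ : (Fin n → ℝ) → (Fin m → ℝ)} (hφ : ContDiff ℝ (⊤ : ℕ∞) φ)
    (hψ : ContDiff ℝ (⊤ : ℕ∞) ψ)
    (hlin : ∀ (i : Fin m) (x : Fin n → ℝ),
      deriv (fun t : ℝ => EulerLagrange L (fun y => φ y + t • ψ y) i x) 0 = 0)
    (i : Fin m) (x : Fin n → ℝ) :
    fderiv ℝ (fderiv ℝ L) (jet1 φ x) (jet1 ψ x) (Pi.single i 1, 0)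
      = ∑ a, pd a (fun y => fderiv ℝ (fderiv ℝ L) (jet1 φ y) (jet1 ψ y)
          (0, Pi.single a (Pi.single i 1))) x := by
  have hφd : Differentiable ℝ φ := hφ.differentiable (by simp)
  have hψd : Differentiable ℝ ψ := hψ.differentiable (by simp)
  set eu : JJ n m := ((Pi.single i 1 : Fin m → ℝ), (0 : Fin n → Fin m → ℝ)) with heu
  have hL2 : ContDiff ℝ 2 (fderiv ℝ L) := hL.fderiv_right (by norm_num)
  -- rewrite the Euler-Lagrange expression along the perturbed field
  have hEL : ∀ t : ℝ, EulerLagrange L (fun y => φ y + t • ψ y) i x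
      = fderiv ℝ L (jet1 φ x + t • jet1 ψ x) eu
        - ∑ a, pd a (fun y => fderiv ℝ L (jet1 φ y + t • jet1 ψ y)
            ((0 : Fin m → ℝ), Pi.single a (Pi.single i 1))) x := by
    intro t
    unfold EulerLagrange dLdu dLdp
    rw [jet1_add_smul hφd hψd t x]
    congr 1
    refine Finset.sum_congr rfl fun a _ => ?_
    have hfun : (fun y => fderiv ℝ L (jet1 (fun z => φ z + t • ψ z) y)
          ((0 : Fin m → ℝ), Pi.single a (Pi.single i 1)))
        = fun y => fderiv ℝ L (jet1 φ y + t • jet1 ψ y)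
          ((0 : Fin m → ℝ), Pi.single a (Pi.single i 1)) := by
      funext y
      rw [jet1_add_smul hφd hψd t y]
    rw [hfun]
  -- derivative of the first term
  have h1 : HasDerivAt (fun t : ℝ => fderiv ℝ L (jet1 φ x + t • jet1 ψ x) eu)
      (fderiv ℝ (fderiv ℝ L) (jet1 φ x) (jet1 ψ x) eu) 0 := by
    have := hasDerivAt_along (G := fun q => fderiv ℝ L q eu)
      (hasFDerivAt_fderiv_apply hL eu (jet1 φ x)).differentiableAt (jet1 ψ x)
    rwa [(hasFDerivAt_fderiv_apply hL eu (jet1 φ x)).fderiv] at this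
  -- derivative of each divergence term, with swap of derivatives
  have h2 : ∀ a : Fin n, HasDerivAt (fun t : ℝ =>
        pd a (fun y => fderiv ℝ L (jet1 φ y + t • jet1 ψ y)
          ((0 : Fin m → ℝ), Pi.single a (Pi.single i 1))) x)
      (pd a (fun y => fderiv ℝ (fderiv ℝ L) (jet1 φ y) (jet1 ψ y)
          ((0 : Fin m → ℝ), Pi.single a (Pi.single i 1))) x) 0 := by
    intro a
    set ep : JJ n m := ((0 : Fin m → ℝ), Pi.single a (Pi.single i 1)) with hep
    have hinner : ContDiff ℝ 2 (fun q : ℝ × (Fin n → ℝ) =>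
        jet1 φ q.2 + q.1 • jet1 ψ q.2) :=
      (((contDiff_jet1 hφ).of_le (by exact_mod_cast ENat.natCast_le_of_coe_top_le_withTop le_rfl 2)).comp contDiff_snd).add
        (contDiff_fst.smul (((contDiff_jet1 hψ).of_le (by exact_mod_cast ENat.natCast_le_of_coe_top_le_withTop le_rfl 2)).comp contDiff_snd))
    have houter : ContDiff ℝ 2 (fun q : JJ n m => fderiv ℝ L q ep) :=
      hL2.clm_apply contDiff_const
    have hg : ContDiff ℝ 2 (fun q : ℝ × (Fin n → ℝ) =>
        fderiv ℝ L (jet1 φ q.2 + q.1 • jet1 ψ q.2) ep) := houter.comp hinner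
    have hswap := hasDerivAt_pd_swap hg x (Pi.single a 1)
    have hder : (fun y => deriv (fun t : ℝ =>
          fderiv ℝ L (jet1 φ y + t • jet1 ψ y) ep) 0)
        = fun y => fderiv ℝ (fderiv ℝ L) (jet1 φ y) (jet1 ψ y) ep := by
      funext y
      have hd := hasDerivAt_along (G := fun q => fderiv ℝ L q ep)
        (hasFDerivAt_fderiv_apply hL ep (jet1 φ y)).differentiableAt (jet1 ψ y)
      rw [hd.deriv, (hasFDerivAt_fderiv_apply hL ep (jet1 φ y)).fderiv]
      rfl
    rw [hder] at hswap
    exact hswap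
  -- combine with the linearized EL equation
  have hcomb : HasDerivAt (fun t : ℝ => EulerLagrange L (fun y => φ y + t • ψ y) i x)
      (fderiv ℝ (fderiv ℝ L) (jet1 φ x) (jet1 ψ x) eu
        - ∑ a, pd a (fun y => fderiv ℝ (fderiv ℝ L) (jet1 φ y) (jet1 ψ y)
            ((0 : Fin m → ℝ), Pi.single a (Pi.single i 1))) x) 0 := by
    have hsum : HasDerivAt (fun t : ℝ => ∑ a, pd a (fun y =>
          fderiv ℝ L (jet1 φ y + t • jet1 ψ y)
            ((0 : Fin m → ℝ), Pi.single a (Pi.single i 1))) x)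
        (∑ a, pd a (fun y => fderiv ℝ (fderiv ℝ L) (jet1 φ y) (jet1 ψ y)
            ((0 : Fin m → ℝ), Pi.single a (Pi.single i 1))) x) 0 :=
      HasDerivAt.fun_sum (fun a _ => h2 a)
    have h := h1.sub hsum
    have hfun : (fun t : ℝ => EulerLagrange L (fun y => φ y + t • ψ y) i x)
        = fun t : ℝ => fderiv ℝ L (jet1 φ x + t • jet1 ψ x) eu
          - ∑ a, pd a (fun y => fderiv ℝ L (jet1 φ y + t • jet1 ψ y)
              ((0 : Fin m → ℝ), Pi.single a (Pi.single i 1))) x := funext hEL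
    rw [hfun]
    exact h
  have := hcomb.deriv
  rw [hlin i x] at this
  have := sub_eq_zero.mp this.symm
  linarith [this]


/-- on a solution `φ` of the Euler–Lagrange equations, and for two solutions
`ψ₁, ψ₂` of the linearized Euler–Lagrange equations along `φ`, the canonical presymplectic
current `σ^a = ψ₁^i δ_{ψ₂}(∂L/∂p_a^i) − ψ₂^i δ_{ψ₁}(∂L/∂p_a^i)` is conserved. -/
theorem presymplectic_current_conserved (n m : ℕ) (hn : 0 < n) (hm : 0 < m)
    (L : (Fin m → ℝ) × (Fin n → Fin m → ℝ) → ℝ) (hL : ContDiff ℝ 3 L)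
    (φ ψ₁ ψ₂ : (Fin n → ℝ) → (Fin m → ℝ))
    (hφ : ContDiff ℝ (⊤ : ℕ∞) φ)
    (hψ₁ : ContDiff ℝ (⊤ : ℕ∞) ψ₁) (hψ₂ : ContDiff ℝ (⊤ : ℕ∞) ψ₂)
    (hsol : ∀ (i : Fin m) (x : Fin n → ℝ), EulerLagrange L φ i x = 0)
    (hlin1 : ∀ (i : Fin m) (x : Fin n → ℝ),
      deriv (fun t : ℝ => EulerLagrange L (fun y => φ y + t • ψ₁ y) i x) 0 = 0)
    (hlin2 : ∀ (i : Fin m) (x : Fin n → ℝ),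
      deriv (fun t : ℝ => EulerLagrange L (fun y => φ y + t • ψ₂ y) i x) 0 = 0)
    (σ : Fin n → (Fin n → ℝ) → ℝ)
    (hσ : ∀ (a : Fin n) (x : Fin n → ℝ),
      σ a x =
        (∑ i, ψ₁ x i *
          deriv (fun t : ℝ => dLdp L a i
            (φ x + t • ψ₂ x,
             fun b => fderiv ℝ φ x (Pi.single b 1) + t • fderiv ℝ ψ₂ x (Pi.single b 1))) 0)
        - ∑ i, ψ₂ x i *
          deriv (fun t : ℝ => dLdp L a i
            (φ x + t • ψ₁ x,
             fun b => fderiv ℝ φ x (Pi.single b 1) + t • fderiv ℝ ψ₁ x (Pi.single b 1))) 0) :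
    ∀ x : Fin n → ℝ, ∑ a, pd a (σ a) x = 0 := by
  intro x
  have hψ1d : Differentiable ℝ ψ₁ := hψ₁.differentiable (by simp)
  have hψ2d : Differentiable ℝ ψ₂ := hψ₂.differentiable (by simp)
  have hLd : Differentiable ℝ L := hL.differentiable (by norm_num)
  have htwo : (2 : WithTop ℕ∞) ≤ ((⊤ : ℕ∞) : WithTop ℕ∞) :=
    by exact_mod_cast ENat.natCast_le_of_coe_top_le_withTop le_rfl 2
  have hone : (1 : WithTop ℕ∞) ≤ ((⊤ : ℕ∞) : WithTop ℕ∞) :=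
    by exact_mod_cast ENat.natCast_le_of_coe_top_le_withTop le_rfl 1
  -- the Hessian along jets is C¹
  have hH1 : ContDiff ℝ 1 (fun y => fderiv ℝ (fderiv ℝ L) (jet1 φ y)) := by
    have h3 : ContDiff ℝ 1 (fderiv ℝ (fderiv ℝ L)) :=
      (hL.fderiv_right (m := 2) (by norm_num)).fderiv_right (by norm_num)
    exact h3.comp ((contDiff_jet1 hφ).of_le hone)
  -- the basic entries σ is built from, and their differentiability
  have hB : ∀ (ψ : (Fin n → ℝ) → (Fin m → ℝ)), ContDiff ℝ (⊤ : ℕ∞) ψ →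
      ∀ e : JJ n m, Differentiable ℝ
        (fun y => fderiv ℝ (fderiv ℝ L) (jet1 φ y) (jet1 ψ y) e) := by
    intro ψ hψ e
    exact ((hH1.clm_apply ((contDiff_jet1 hψ).of_le hone)).clm_apply
      contDiff_const).differentiable one_ne_zero
  -- compute the deriv terms appearing in hσ
  have hterm : ∀ (ψ : (Fin n → ℝ) → (Fin m → ℝ)) (a : Fin n) (i : Fin m) (y : Fin n → ℝ),
      deriv (fun t : ℝ => dLdp L a i
          (φ y + t • ψ y,
           fun b => fderiv ℝ φ y (Pi.single b 1) + t • fderiv ℝ ψ y (Pi.single b 1))) 0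
        = fderiv ℝ (fderiv ℝ L) (jet1 φ y) (jet1 ψ y)
            ((0 : Fin m → ℝ), Pi.single a (Pi.single i 1)) := by
    intro ψ a i y
    set ep : JJ n m := ((0 : Fin m → ℝ), Pi.single a (Pi.single i 1)) with hep
    have hpair : ∀ t : ℝ,
        ((φ y + t • ψ y,
          fun b => fderiv ℝ φ y (Pi.single b 1) + t • fderiv ℝ ψ y (Pi.single b 1)) :
            JJ n m) = jet1 φ y + t • jet1 ψ y := by
      intro t
      unfold jet1
      refine Prod.ext rfl ?_
      funext b
      simp
    have hfun : (fun t : ℝ => dLdp L a i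
          (φ y + t • ψ y,
           fun b => fderiv ℝ φ y (Pi.single b 1) + t • fderiv ℝ ψ y (Pi.single b 1)))
        = fun t : ℝ => fderiv ℝ L (jet1 φ y + t • jet1 ψ y) ep := by
      funext t
      rw [show dLdp L a i
          ((φ y + t • ψ y,
           fun b => fderiv ℝ φ y (Pi.single b 1) + t • fderiv ℝ ψ y (Pi.single b 1)) : JJ n m)
          = fderiv ℝ L ((φ y + t • ψ y,
           fun b => fderiv ℝ φ y (Pi.single b 1) + t • fderiv ℝ ψ y (Pi.single b 1)) : JJ n m)
            ep from rfl]
      rw [hpair t]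
    rw [hfun]
    have hd := hasDerivAt_along (G := fun q => fderiv ℝ L q ep)
      (hasFDerivAt_fderiv_apply hL ep (jet1 φ y)).differentiableAt (jet1 ψ y)
    rw [hd.deriv, (hasFDerivAt_fderiv_apply hL ep (jet1 φ y)).fderiv]
    rfl
  -- explicit form of σ
  have hσ' : ∀ a : Fin n, σ a = fun y =>
      (∑ i, ψ₁ y i * fderiv ℝ (fderiv ℝ L) (jet1 φ y) (jet1 ψ₂ y)
          ((0 : Fin m → ℝ), Pi.single a (Pi.single i 1)))
      - ∑ i, ψ₂ y i * fderiv ℝ (fderiv ℝ L) (jet1 φ y) (jet1 ψ₁ y)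
          ((0 : Fin m → ℝ), Pi.single a (Pi.single i 1)) := by
    intro a
    funext y
    rw [hσ a y]
    congr 1
    · exact Finset.sum_congr rfl fun i _ => by rw [hterm ψ₂ a i y]
    · exact Finset.sum_congr rfl fun i _ => by rw [hterm ψ₁ a i y]
  -- partial derivative of σ a via product rule
  have hpdσ : ∀ a : Fin n, pd a (σ a) x
      = (∑ i, (ψ₁ x i * pd a (fun y => fderiv ℝ (fderiv ℝ L) (jet1 φ y) (jet1 ψ₂ y)
            ((0 : Fin m → ℝ), Pi.single a (Pi.single i 1))) x
          + fderiv ℝ (fderiv ℝ L) (jet1 φ x) (jet1 ψ₂ x)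
              ((0 : Fin m → ℝ), Pi.single a (Pi.single i 1))
            * pd a (fun y => ψ₁ y i) x))
        - ∑ i, (ψ₂ x i * pd a (fun y => fderiv ℝ (fderiv ℝ L) (jet1 φ y) (jet1 ψ₁ y)
            ((0 : Fin m → ℝ), Pi.single a (Pi.single i 1))) x
          + fderiv ℝ (fderiv ℝ L) (jet1 φ x) (jet1 ψ₁ x)
              ((0 : Fin m → ℝ), Pi.single a (Pi.single i 1))
            * pd a (fun y => ψ₂ y i) x) := by
    intro a
    have hc1 : ∀ i : Fin m, DifferentiableAt ℝ (fun y => ψ₁ y i) x :=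
      fun i => differentiableAt_pi.mp (hψ1d x) i
    have hc2 : ∀ i : Fin m, DifferentiableAt ℝ (fun y => ψ₂ y i) x :=
      fun i => differentiableAt_pi.mp (hψ2d x) i
    have hm1 : ∀ i : Fin m, DifferentiableAt ℝ (fun y => ψ₁ y i *
        fderiv ℝ (fderiv ℝ L) (jet1 φ y) (jet1 ψ₂ y)
          ((0 : Fin m → ℝ), Pi.single a (Pi.single i 1))) x :=
      fun i => (hc1 i).mul ((hB ψ₂ hψ₂ _) x)
    have hm2 : ∀ i : Fin m, DifferentiableAt ℝ (fun y => ψ₂ y i *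
        fderiv ℝ (fderiv ℝ L) (jet1 φ y) (jet1 ψ₁ y)
          ((0 : Fin m → ℝ), Pi.single a (Pi.single i 1))) x :=
      fun i => (hc2 i).mul ((hB ψ₁ hψ₁ _) x)
    unfold pd
    rw [hσ' a]
    rw [fderiv_fun_sub (DifferentiableAt.fun_sum fun i _ => hm1 i)
      (DifferentiableAt.fun_sum fun i _ => hm2 i), ContinuousLinearMap.sub_apply]
    congr 1
    · rw [fderiv_fun_sum fun i _ => hm1 i, ContinuousLinearMap.sum_apply]
      refine Finset.sum_congr rfl fun i _ => ?_
      rw [fderiv_fun_mul (hc1 i) ((hB ψ₂ hψ₂ _) x)]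
      simp [smul_eq_mul, mul_comm]
    · rw [fderiv_fun_sum fun i _ => hm2 i, ContinuousLinearMap.sum_apply]
      refine Finset.sum_congr rfl fun i _ => ?_
      rw [fderiv_fun_mul (hc2 i) ((hB ψ₁ hψ₁ _) x)]
      simp [smul_eq_mul, mul_comm]
  -- the combined double sum equals a Hessian pairing
  have hX : ∀ (χ χ' : (Fin n → ℝ) → (Fin m → ℝ)), ContDiff ℝ (⊤ : ℕ∞) χ →
      (hχ' : Differentiable ℝ χ') →
      (∀ (i : Fin m) (x : Fin n → ℝ),
        deriv (fun t : ℝ => EulerLagrange L (fun y => φ y + t • χ y) i x) 0 = 0) →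
      (∑ a, ∑ i, (χ' x i * pd a (fun y => fderiv ℝ (fderiv ℝ L) (jet1 φ y) (jet1 χ y)
            ((0 : Fin m → ℝ), Pi.single a (Pi.single i 1))) x
          + fderiv ℝ (fderiv ℝ L) (jet1 φ x) (jet1 χ x)
              ((0 : Fin m → ℝ), Pi.single a (Pi.single i 1))
            * pd a (fun y => χ' y i) x))
        = fderiv ℝ (fderiv ℝ L) (jet1 φ x) (jet1 χ x) (jet1 χ' x) := by
    intro χ χ' hχ hχ' hlin
    have h1 : ∀ a : Fin n, ∑ i, (χ' x i * pd a (fun y =>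
          fderiv ℝ (fderiv ℝ L) (jet1 φ y) (jet1 χ y)
            ((0 : Fin m → ℝ), Pi.single a (Pi.single i 1))) x
        + fderiv ℝ (fderiv ℝ L) (jet1 φ x) (jet1 χ x)
            ((0 : Fin m → ℝ), Pi.single a (Pi.single i 1))
          * pd a (fun y => χ' y i) x)
        = (∑ i, χ' x i * pd a (fun y => fderiv ℝ (fderiv ℝ L) (jet1 φ y) (jet1 χ y)
            ((0 : Fin m → ℝ), Pi.single a (Pi.single i 1))) x)
          + ∑ i, fderiv ℝ (fderiv ℝ L) (jet1 φ x) (jet1 χ x)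
              ((0 : Fin m → ℝ), Pi.single a (Pi.single i 1))
            * pd a (fun y => χ' y i) x := fun a => Finset.sum_add_distrib
    simp only [h1]
    rw [Finset.sum_add_distrib]
    have h2 : (∑ a, ∑ i, χ' x i * pd a (fun y =>
          fderiv ℝ (fderiv ℝ L) (jet1 φ y) (jet1 χ y)
            ((0 : Fin m → ℝ), Pi.single a (Pi.single i 1))) x)
        = ∑ i, χ' x i * fderiv ℝ (fderiv ℝ L) (jet1 φ x) (jet1 χ x)
            ((Pi.single i 1 : Fin m → ℝ), (0 : Fin n → Fin m → ℝ)) := by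
      rw [Finset.sum_comm]
      refine Finset.sum_congr rfl fun i _ => ?_
      rw [← Finset.mul_sum, ← linearized_key hL hφ hχ hlin i x]
    have h3 : (∑ a, ∑ i, fderiv ℝ (fderiv ℝ L) (jet1 φ x) (jet1 χ x)
            ((0 : Fin m → ℝ), Pi.single a (Pi.single i 1))
          * pd a (fun y => χ' y i) x)
        = ∑ a, ∑ i, fderiv ℝ χ' x (Pi.single a 1) i
            * fderiv ℝ (fderiv ℝ L) (jet1 φ x) (jet1 χ x)
              ((0 : Fin m → ℝ), Pi.single a (Pi.single i 1)) := by
      refine Finset.sum_congr rfl fun a _ => Finset.sum_congr rfl fun i _ => ?_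
      rw [pd_coord hχ' a i x, mul_comm]
    rw [h2, h3, clm_decomp (fderiv ℝ (fderiv ℝ L) (jet1 φ x) (jet1 χ x)) (jet1 χ' x)]
    rfl
  -- symmetry of the second derivative
  have hsymmH := second_derivative_symmetric (f := L) (fun y => (hLd y).hasFDerivAt)
    (((hL.fderiv_right (m := 2) (by norm_num)).differentiable (by norm_num)
      (jet1 φ x)).hasFDerivAt) (jet1 ψ₂ x) (jet1 ψ₁ x)
  simp only [hpdσ]
  rw [Finset.sum_sub_distrib, hX ψ₂ ψ₁ hψ₂ hψ1d hlin2, hX ψ₁ ψ₂ hψ₁ hψ2d hlin1, hsymmH,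
    sub_self]

end
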